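/- Let n ≥ 2 and let P be a partial n-Metric on a set X. Define d : X × X → ℝ by d(x,y) = P(y, x,…,x) − P(x,…,x) + P(x, y,…,y) − P(y,…,y), where P(y,x,…,x) has n−1 copies of x, P(x,…,x) has n copies of x, and similarly for y. Then d is a metric on X. -/
import Mathlib


/-- The `n`-tuple with `n − 1` copies of `a` and `b` in the last coordinate. -/
def repl {X : Type*} {n : ℕ} (a b : X) : Fin n → X :=
  fun i => if i.val = n - 1 then b else a

/-- The `n`-tuple `(b, a, …, a)` with `n − 1` copies of `a`. -/
def headRepl {X : Type*} {n : ℕ} (b a : X) : Fin n → X :=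
  fun i => if i.val = 0 then b else a

/-- `P` is a partial n-𝔐etric on `X` (for `2 ≤ n`). -/
def IsPartialNMetric {X : Type*} {n : ℕ} (hn : 2 ≤ n) (P : (Fin n → X) → ℝ) : Prop :=
  (∀ x₁ x₂ : X, P (fun _ => x₁) ≤ P (repl x₁ x₂)) ∧
  (∀ (x : Fin n → X) (σ : Equiv.Perm (Fin n)), P (x ∘ σ) = P x) ∧
  (∀ x₁ x₂ : X,
    (P (repl x₁ x₂) = P (fun _ => x₁) ∧ P (repl x₂ x₁) = P (fun _ => x₂)) ↔ x₁ = x₂) ∧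
  (∀ (x : Fin n → X) (a : X),
    P x ≤ P (Function.update x ⟨n - 1, by omega⟩ a) + P (repl a (x ⟨n - 1, by omega⟩))
      - P (fun _ => a))

lemma headRepl_eq_repl_comp {X : Type*} {n : ℕ} (hn : 2 ≤ n) (a b : X) :
    (repl a b : Fin n → X) ∘ (Equiv.swap (⟨0, by omega⟩ : Fin n) ⟨n - 1, by omega⟩)
      = headRepl b a := by
  funext i
  simp only [Function.comp, repl, headRepl]
  rcases eq_or_ne i ⟨0, by omega⟩ with h | h
  · subst h
    rw [Equiv.swap_apply_left]
    simp [show (0:ℕ) ≠ n - 1 by omega]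
  · rcases eq_or_ne i ⟨n - 1, by omega⟩ with h2 | h2
    · subst h2
      rw [Equiv.swap_apply_right]
      simp [show n - 1 ≠ 0 by omega, show (0:ℕ) ≠ n - 1 by omega]
    · rw [Equiv.swap_apply_of_ne_of_ne h h2]
      have h1' : i.val ≠ 0 := fun hc => h (Fin.ext hc)
      have h2' : i.val ≠ n - 1 := fun hc => h2 (Fin.ext hc)
      simp [h1', h2']

lemma update_repl {X : Type*} {n : ℕ} (hn : 2 ≤ n) (a b c : X) :
    Function.update (repl a b : Fin n → X) ⟨n - 1, by omega⟩ c = repl a c := by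
  funext i
  rcases eq_or_ne i ⟨n - 1, by omega⟩ with h | h
  · subst h; simp [repl]
  · rw [Function.update_of_ne h]
    have h' : i.val ≠ n - 1 := fun hc => h (Fin.ext hc)
    simp [repl, h']

/-- A partial n-𝔐etric induces a metric via
`d(x,y) = P(y,x,…,x) − P(x,…,x) + P(x,y,…,y) − P(y,…,y)`. -/
theorem partialNMetric_induces_metric {X : Type*} {n : ℕ} (hn : 2 ≤ n)
    (P : (Fin n → X) → ℝ) (hP : IsPartialNMetric hn P)
    (d : X → X → ℝ)
    (hd : ∀ x y, d x y =
      P (headRepl y x) - P (fun _ => x) + P (headRepl x y) - P (fun _ => y)) :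
    (∀ x y, 0 ≤ d x y) ∧
    (∀ x y, d x y = d y x) ∧
    (∀ x y, d x y = 0 ↔ x = y) ∧
    (∀ x y z, d x y ≤ d x z + d z y) := by
  obtain ⟨hb, hsym, hsep, hinq⟩ := hP
  have hh : ∀ a b : X, P (headRepl b a) = P (repl a b) := fun a b => by
    rw [← headRepl_eq_repl_comp hn a b, hsym]
  have hd' : ∀ x y, d x y = (P (repl x y) - P (fun _ => x)) + (P (repl y x) - P (fun _ => y)) := by
    intro x y; rw [hd, hh, hh]; ring
  have hnn : ∀ x y, 0 ≤ d x y := by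
    intro x y
    rw [hd']
    have h1 := hb x y
    have h2 := hb y x
    linarith
  refine ⟨hnn, fun x y => by rw [hd', hd']; ring, ?_, ?_⟩
  · intro x y
    constructor
    · intro h0
      rw [hd'] at h0
      have h1 := hb x y
      have h2 := hb y x
      exact (hsep x y).mp ⟨by linarith, by linarith⟩
    · rintro rfl
      rw [hd']
      have : (repl x x : Fin n → X) = fun _ => x := by
        funext i; simp [repl]
      rw [this]; ring
  · intro x y z
    have t1 := hinq (repl x y) z
    have t2 := hinq (repl y x) z
    have hv : (repl x y : Fin n → X) ⟨n - 1, by omega⟩ = y := by simp [repl]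
    have hv' : (repl y x : Fin n → X) ⟨n - 1, by omega⟩ = x := by simp [repl]
    rw [update_repl hn, hv] at t1
    rw [update_repl hn, hv'] at t2
    rw [hd' x y, hd' x z, hd' z y]
    linarith
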